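/- (Theorem 2, second part) Fix b > 0, s ∈ (0,1], λ > 0, and shape parameters 0 < a < 1 < a' < ∞. For ε ∈ (0,1), define P(ε; c) = s ∫₀^ε e^{-λ u} π_RSB(u; c, b) du / ((1-s) e^{-λ} + s ∫₀^∞ e^{-λ u} π_RSB(u; c, b) du) for c ∈ {a, a'}. Then P(ε; a) / P(ε; a') → ∞ as ε → 0+. -/

import Mathlib

/-! For every shape `c > 0` the bounds `u / (1 + u) ≤ log (1 + u) ≤ u` give
`log (1 + u) ^ (c - 1) / (1 + u) ≤ u ^ (c - 1)`, so the integrand `e^{-λu} π_RSB(u; c, b)` is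
dominated by `u ^ (c - 1) e^{-λu} / B(c, b)`. Hence it is integrable, the normalizing constant
is positive, and `P(ε; c) = O(ε ^ c)`. For `c ≤ 1` the exponent `c - 1` is nonpositive, which
reverses the bound `log (1 + u) ≤ u` into `log (1 + u) ^ (c - 1) ≥ u ^ (c - 1)`, and on `(0, 1]`
the remaining factors are bounded below, so `P(ε; c) ≥ A ε ^ c`. With `a < 1 < a'` this yields
`P(ε; a) / P(ε; a') ≥ C ε ^ (a - a') → ∞`. -/

open MeasureTheory Set Filter

noncomputable def betaFn (a b : ℝ) : ℝ :=
  Real.Gamma a * Real.Gamma b / Real.Gamma (a + b)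

noncomputable def piRSB (a b u : ℝ) : ℝ :=
  (1 / betaFn a b) * (Real.log (1 + u)) ^ (a - 1) * (1 + u)⁻¹ *
    (1 + Real.log (1 + u)) ^ (-(a + b))


/-- The posterior probability `Pr(η < ε | y = 0)` under Poisson rate `lam` and the
RSB mixture `(1-s)δ₁ + s π_RSB(·; c, b)` with shape parameter `c`. -/
noncomputable def postZeroProb (b s lam c ε : ℝ) : ℝ :=
  s * (∫ u in Set.Ioo (0 : ℝ) ε, Real.exp (-(lam * u)) * piRSB c b u) /
    ((1 - s) * Real.exp (-lam)
      + s * ∫ u in Set.Ioi (0 : ℝ), Real.exp (-(lam * u)) * piRSB c b u)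

open Real Topology

lemma log_one_add_le_self {u : ℝ} (hu : -1 < u) : log (1 + u) ≤ u := by
  linarith [log_le_sub_one_of_pos (show 0 < 1 + u by linarith)]

lemma div_one_add_le_log_one_add {u : ℝ} (hu : -1 < u) : u / (1 + u) ≤ log (1 + u) := by
  have h := one_sub_inv_le_log_of_pos (show 0 < 1 + u by linarith)
  have h1 : (1 : ℝ) + u ≠ 0 := by linarith
  rwa [show 1 - (1 + u)⁻¹ = u / (1 + u) by field_simp; ring] at h

lemma rpow_log_one_add_mul_inv_le {c u : ℝ} (hc : 0 < c) (hu : 0 < u) :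
    log (1 + u) ^ (c - 1) * (1 + u)⁻¹ ≤ u ^ (c - 1) := by
  have hlog : 0 < log (1 + u) := log_pos (by linarith)
  rcases le_total 1 c with hc1 | hc1
  · calc log (1 + u) ^ (c - 1) * (1 + u)⁻¹ ≤ u ^ (c - 1) * 1 := by
          gcongr
          · exact log_one_add_le_self (by linarith)
          · exact inv_le_one_of_one_le₀ (by linarith)
      _ = u ^ (c - 1) := mul_one _
  · calc log (1 + u) ^ (c - 1) * (1 + u)⁻¹ ≤ (u / (1 + u)) ^ (c - 1) * (1 + u)⁻¹ := by
          refine mul_le_mul_of_nonneg_right ?_ (by positivity)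
          exact rpow_le_rpow_of_nonpos (by positivity) (div_one_add_le_log_one_add (by linarith))
            (by linarith)
      _ = u ^ (c - 1) / (1 + u) ^ c := by
          rw [div_rpow hu.le (by positivity)]
          field_simp
          rw [mul_comm, ← rpow_add_one (by positivity), sub_add_cancel]
      _ ≤ u ^ (c - 1) := div_le_self (by positivity) (one_le_rpow (by linarith) hc.le)

lemma tendsto_div_atTop_of_rpow_bounds {f g : ℝ → ℝ} {A B p q : ℝ} (hA : 0 < A) (hB : 0 < B)
    (hpq : p < q) (hf : ∀ᶠ x in 𝓝[>] 0, A * x ^ p ≤ f x)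
    (hg : ∀ᶠ x in 𝓝[>] 0, 0 < g x ∧ g x ≤ B * x ^ q) :
    Tendsto (fun x ↦ f x / g x) (𝓝[>] 0) atTop := by
  refine tendsto_atTop_mono' _ ?_
    ((tendsto_rpow_neg_nhdsGT_zero (sub_neg.mpr hpq)).const_mul_atTop (div_pos hA hB))
  filter_upwards [hf, hg, self_mem_nhdsWithin] with x hfx ⟨hgx, hgx_le⟩ (hx : 0 < x)
  calc A / B * x ^ (p - q) = A * x ^ p / (B * x ^ q) := by
        rw [rpow_sub hx]
        field_simp
    _ ≤ f x / g x := div_le_div₀ ((by positivity : 0 ≤ A * x ^ p).trans hfx) hfx hgx hgx_le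

section RSB

variable {a b lam s u ε : ℝ}

lemma betaFn_pos (ha : 0 < a) (hb : 0 < b) : 0 < betaFn a b :=
  div_pos (mul_pos (Gamma_pos_of_pos ha) (Gamma_pos_of_pos hb)) (Gamma_pos_of_pos (by linarith))

lemma piRSB_pos (ha : 0 < a) (hb : 0 < b) (hu : 0 < u) : 0 < piRSB a b u := by
  have hB := betaFn_pos ha hb
  have hlog : 0 < log (1 + u) := log_pos (by linarith)
  unfold piRSB
  positivity

lemma piRSB_le (ha : 0 < a) (hb : 0 < b) (hu : 0 < u) :
    piRSB a b u ≤ u ^ (a - 1) / betaFn a b := by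
  have hB := betaFn_pos ha hb
  have hlog : 0 < log (1 + u) := log_pos (by linarith)
  calc piRSB a b u
      = log (1 + u) ^ (a - 1) * (1 + u)⁻¹ * (1 + log (1 + u)) ^ (-(a + b)) / betaFn a b := by
        unfold piRSB; ring
    _ ≤ u ^ (a - 1) * 1 / betaFn a b := by
        gcongr
        · exact rpow_log_one_add_mul_inv_le ha hu
        · exact rpow_le_one_of_one_le_of_nonpos (by linarith) (by linarith)
    _ = u ^ (a - 1) / betaFn a b := by rw [mul_one]

lemma rpow_le_piRSB (ha : 0 < a) (ha1 : a ≤ 1) (hb : 0 < b) (hu : 0 < u) (hu1 : u ≤ 1) :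
    u ^ (a - 1) / (2 ^ (a + b + 1) * betaFn a b) ≤ piRSB a b u := by
  have hB := betaFn_pos ha hb
  have hlog : 0 < log (1 + u) := log_pos (by linarith)
  have hlog_le : log (1 + u) ≤ u := log_one_add_le_self (by linarith)
  calc u ^ (a - 1) / (2 ^ (a + b + 1) * betaFn a b)
      = 1 / betaFn a b * u ^ (a - 1) * 2⁻¹ * 2 ^ (-(a + b)) := by
        rw [rpow_add two_pos, rpow_one, rpow_neg zero_le_two]
        field_simp
    _ ≤ piRSB a b u := by
        unfold piRSB
        gcongr ?_ * ?_ * ?_ * ?_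
        · exact rpow_le_rpow_of_nonpos hlog hlog_le (by linarith)
        · gcongr; linarith
        · exact rpow_le_rpow_of_nonpos (by positivity) (by linarith) (by linarith)

lemma setIntegral_Ioo_rpow_sub_one {c : ℝ} (hc : 0 < c) (hε : 0 ≤ ε) :
    ∫ u in Ioo 0 ε, u ^ (c - 1) = ε ^ c / c := by
  rw [← integral_Ioc_eq_integral_Ioo, ← intervalIntegral.integral_of_le hε,
    integral_rpow (Or.inl (by linarith)), sub_add_cancel, zero_rpow hc.ne', sub_zero]

lemma integrableOn_exp_mul_piRSB (ha : 0 < a) (hb : 0 < b) (hlam : 0 < lam) :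
    IntegrableOn (fun u ↦ exp (-(lam * u)) * piRSB a b u) (Ioi 0) := by
  have hdom : IntegrableOn (fun u ↦ u ^ (a - 1) * exp (-lam * u) / betaFn a b) (Ioi 0) := by
    have h := (integrableOn_rpow_mul_exp_neg_mul_rpow (s := a - 1) (by linarith) one_pos
      hlam).div_const (betaFn a b)
    simp only [rpow_one] at h
    exact h
  refine hdom.mono' (Measurable.aestronglyMeasurable (by unfold piRSB; fun_prop)) ?_
  refine ae_restrict_of_forall_mem measurableSet_Ioi fun u (hu : 0 < u) ↦ ?_
  rw [Real.norm_of_nonneg (mul_pos (exp_pos _) (piRSB_pos ha hb hu)).le, neg_mul, mul_comm,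
    mul_div_right_comm]
  exact mul_le_mul_of_nonneg_right (piRSB_le ha hb hu) (exp_pos _).le

lemma setIntegral_exp_mul_piRSB_pos (ha : 0 < a) (hb : 0 < b) (hlam : 0 < lam) {t : Set ℝ}
    (ht : MeasurableSet t) (ht_pos : t ⊆ Ioi 0) (ht_vol : volume t ≠ 0) :
    0 < ∫ u in t, exp (-(lam * u)) * piRSB a b u := by
  have hpos : ∀ u ∈ t, 0 < exp (-(lam * u)) * piRSB a b u :=
    fun u hu ↦ mul_pos (exp_pos _) (piRSB_pos ha hb (ht_pos hu))
  rw [setIntegral_pos_iff_support_of_nonneg_ae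
    (ae_restrict_of_forall_mem ht fun u hu ↦ (hpos u hu).le)
    ((integrableOn_exp_mul_piRSB ha hb hlam).mono_set ht_pos)]
  exact (pos_iff_ne_zero.mpr ht_vol).trans_le (measure_mono fun u hu ↦ ⟨(hpos u hu).ne', hu⟩)

lemma setIntegral_exp_mul_piRSB_le (ha : 0 < a) (hb : 0 < b) (hlam : 0 ≤ lam) (hε : 0 < ε) :
    ∫ u in Ioo 0 ε, exp (-(lam * u)) * piRSB a b u ≤ ε ^ a / (a * betaFn a b) := by
  calc ∫ u in Ioo 0 ε, exp (-(lam * u)) * piRSB a b u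
      ≤ ∫ u in Ioo 0 ε, u ^ (a - 1) / betaFn a b := by
        refine integral_mono_of_nonneg
          (ae_restrict_of_forall_mem measurableSet_Ioo fun u hu ↦ ?_)
          (((intervalIntegral.integrableOn_Ioo_rpow_iff hε).mpr (by linarith)).div_const _)
          (ae_restrict_of_forall_mem measurableSet_Ioo fun u hu ↦ ?_)
        · exact (mul_pos (exp_pos _) (piRSB_pos ha hb hu.1)).le
        · calc exp (-(lam * u)) * piRSB a b u ≤ 1 * (u ^ (a - 1) / betaFn a b) := by
                gcongr
                · exact (piRSB_pos ha hb hu.1).le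
                · exact exp_le_one_iff.mpr (by nlinarith [hu.1])
                · exact piRSB_le ha hb hu.1
            _ = u ^ (a - 1) / betaFn a b := one_mul _
    _ = ε ^ a / (a * betaFn a b) := by
        rw [integral_div, setIntegral_Ioo_rpow_sub_one ha hε.le, div_div]

lemma le_setIntegral_exp_mul_piRSB (ha : 0 < a) (ha1 : a ≤ 1) (hb : 0 < b) (hlam : 0 < lam)
    (hε : 0 < ε) (hε1 : ε ≤ 1) :
    exp (-lam) * ε ^ a / (a * 2 ^ (a + b + 1) * betaFn a b) ≤
      ∫ u in Ioo 0 ε, exp (-(lam * u)) * piRSB a b u := by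
  have hB := betaFn_pos ha hb
  calc exp (-lam) * ε ^ a / (a * 2 ^ (a + b + 1) * betaFn a b)
      = ∫ u in Ioo 0 ε, exp (-lam) * (u ^ (a - 1) / (2 ^ (a + b + 1) * betaFn a b)) := by
        rw [integral_const_mul, integral_div, setIntegral_Ioo_rpow_sub_one ha hε.le]
        field_simp
    _ ≤ ∫ u in Ioo 0 ε, exp (-(lam * u)) * piRSB a b u := by
        refine setIntegral_mono_on
          ((((intervalIntegral.integrableOn_Ioo_rpow_iff hε).mpr (by linarith)).div_const
            _).const_mul _)
          ((integrableOn_exp_mul_piRSB ha hb hlam).mono_set Ioo_subset_Ioi_self)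
          measurableSet_Ioo fun u hu ↦ ?_
        gcongr
        · have := hu.1; positivity
        · nlinarith [hu.1, hu.2]
        · exact rpow_le_piRSB ha ha1 hb hu.1 (hu.2.le.trans hε1)

lemma postZeroProb_denom_pos (ha : 0 < a) (hb : 0 < b) (hs : s ∈ Ioc 0 1) (hlam : 0 < lam) :
    0 < (1 - s) * exp (-lam) + s * ∫ u in Ioi 0, exp (-(lam * u)) * piRSB a b u := by
  have hI := setIntegral_exp_mul_piRSB_pos ha hb hlam measurableSet_Ioi subset_rfl (by simp)
  have hs_pos := hs.1
  have hs_le : 0 ≤ 1 - s := sub_nonneg.mpr hs.2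
  positivity

lemma postZeroProb_pos (ha : 0 < a) (hb : 0 < b) (hs : s ∈ Ioc 0 1) (hlam : 0 < lam)
    (hε : 0 < ε) : 0 < postZeroProb b s lam a ε :=
  div_pos (mul_pos hs.1 (setIntegral_exp_mul_piRSB_pos ha hb hlam measurableSet_Ioo
    Ioo_subset_Ioi_self (by simp [hε]))) (postZeroProb_denom_pos ha hb hs hlam)

lemma exists_postZeroProb_le_rpow (ha : 0 < a) (hb : 0 < b) (hs : s ∈ Ioc 0 1) (hlam : 0 < lam) :
    ∃ B > 0, ∀ ε > 0, postZeroProb b s lam a ε ≤ B * ε ^ a := by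
  have hD := postZeroProb_denom_pos ha hb hs hlam
  set D := (1 - s) * exp (-lam) + s * ∫ u in Ioi 0, exp (-(lam * u)) * piRSB a b u
  have hB := betaFn_pos ha hb
  have hs_pos := hs.1
  refine ⟨s / (a * betaFn a b) / D, by positivity, fun ε hε ↦ ?_⟩
  calc postZeroProb b s lam a ε ≤ s * (ε ^ a / (a * betaFn a b)) / D := by
        unfold postZeroProb
        gcongr
        exact setIntegral_exp_mul_piRSB_le ha hb hlam.le hε
    _ = s / (a * betaFn a b) / D * ε ^ a := by ring

lemma exists_rpow_le_postZeroProb (ha : 0 < a) (ha1 : a ≤ 1) (hb : 0 < b) (hs : s ∈ Ioc 0 1)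
    (hlam : 0 < lam) : ∃ A > 0, ∀ ε ∈ Ioc 0 1, A * ε ^ a ≤ postZeroProb b s lam a ε := by
  have hD := postZeroProb_denom_pos ha hb hs hlam
  set D := (1 - s) * exp (-lam) + s * ∫ u in Ioi 0, exp (-(lam * u)) * piRSB a b u
  have hB := betaFn_pos ha hb
  have hs_pos := hs.1
  refine ⟨s * exp (-lam) / (a * 2 ^ (a + b + 1) * betaFn a b) / D, by positivity,
    fun ε hε ↦ ?_⟩
  calc s * exp (-lam) / (a * 2 ^ (a + b + 1) * betaFn a b) / D * ε ^ a
      = s * (exp (-lam) * ε ^ a / (a * 2 ^ (a + b + 1) * betaFn a b)) / D := by ring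
    _ ≤ postZeroProb b s lam a ε := by
        unfold postZeroProb
        gcongr
        exact le_setIntegral_exp_mul_piRSB ha ha1 hb hlam hε.1 hε.2

end RSB

/-- (Theorem 2, second part) For shapes `0 < a < 1 < a'`, the ratio of posterior
probabilities of `η < ε` given a zero count diverges as `ε → 0⁺`. -/
theorem posterior_zero_prob_ratio_diverges (a a' b s lam : ℝ) (hb : 0 < b)
    (hs : s ∈ Set.Ioc (0 : ℝ) 1) (hlam : 0 < lam)
    (ha : 0 < a) (ha1 : a < 1) (ha' : 1 < a') :
    Filter.Tendsto (fun ε : ℝ => postZeroProb b s lam a ε / postZeroProb b s lam a' ε)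
      (nhdsWithin 0 (Set.Ioi 0)) Filter.atTop := by
  have ha'_pos : 0 < a' := by linarith
  obtain ⟨A, hA, h_lower⟩ := exists_rpow_le_postZeroProb ha ha1.le hb hs hlam
  obtain ⟨B, hB, h_upper⟩ := exists_postZeroProb_le_rpow ha'_pos hb hs hlam
  refine tendsto_div_atTop_of_rpow_bounds hA hB (ha1.trans ha') ?_ ?_
  · filter_upwards [Ioc_mem_nhdsGT one_pos] with ε hε using h_lower ε hε
  · filter_upwards [self_mem_nhdsWithin] with ε (hε : 0 < ε)
    exact ⟨postZeroProb_pos ha'_pos hb hs hlam hε, h_upper ε hε⟩
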